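/- arXiv:math/0509413 — 4 statements merged into one kernel-verified Lean document; each statement's English description precedes it below -/
import Mathlib

section
/- A 3-regular 4-ordered simple graph on more than 4 vertices contains no triangle (cycle of length 3). -/
/-! A triangle `a b c` in a cubic graph leaves each corner exactly one edge out of the triangle,
say `a a'` and `b b'`. If `a' ≠ b'`, take a cycle through `a', a, b', b` in this order: the
segment from `a` to `b'` must leave `a` through `c`, and then the segment from `b` back to `a'`
has no unused edge at `b` to leave through. So all three outgoing edges end at one vertex `w`,
and `{a, b, c, w}` is a copy of `K₄`. Being `3`-regular, this `K₄` is a whole connected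
component, so a fifth vertex cannot lie on a common cycle with it. -/

/-- A cycle in `G` containing the four vertices `v₁, v₂, v₃, v₄` in this order:
it decomposes as four consecutive walks `v₁ → v₂ → v₃ → v₄ → v₁`. -/
def SimpleGraph.CycleInOrder4 {V : Type*} (G : SimpleGraph V)
    (v₁ v₂ v₃ v₄ : V) : Prop :=
  ∃ (p : G.Walk v₁ v₂) (q : G.Walk v₂ v₃) (r : G.Walk v₃ v₄) (s : G.Walk v₄ v₁),
    (p.append (q.append (r.append s))).IsCycle

/-- `G` is `4`-ordered: for any four distinct vertices there is a cycle
containing them in the specified order. -/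
def SimpleGraph.FourOrdered {V : Type*} (G : SimpleGraph V) : Prop :=
  ∀ v₁ v₂ v₃ v₄ : V, v₁ ≠ v₂ → v₁ ≠ v₃ → v₁ ≠ v₄ → v₂ ≠ v₃ → v₂ ≠ v₄ →
    v₃ ≠ v₄ → G.CycleInOrder4 v₁ v₂ v₃ v₄

namespace SimpleGraph

variable {V : Type*} {G : SimpleGraph V}

theorem Walk.IsCycle.tail_support_nodup_of_append₄ {v₁ v₂ v₃ v₄ : V} {p : G.Walk v₁ v₂}
    {q : G.Walk v₂ v₃} {r : G.Walk v₃ v₄} {s : G.Walk v₄ v₁}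
    (h : (p.append (q.append (r.append s))).IsCycle) :
    (p.support.tail ++ (q.support.tail ++ (r.support.tail ++ s.support.tail))).Nodup := by
  simpa only [Walk.tail_support_append] using h.support_nodup

section Regular

variable [G.LocallyFinite] {k : ℕ}

theorem IsRegularOfDegree.neighborFinset_eq_of_card_eq (hreg : G.IsRegularOfDegree k)
    {x : V} {s : Finset V} (hs : ∀ y ∈ s, G.Adj x y) (hcard : s.card = k) :
    G.neighborFinset x = s :=
  (Finset.eq_of_subset_of_card_le (fun y hy => (mem_neighborFinset G x y).2 (hs y hy))
    (by rw [card_neighborFinset_eq_degree, hreg x, hcard])).symm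

theorem IsRegularOfDegree.exists_adj_notMem (hreg : G.IsRegularOfDegree k) (x : V)
    {s : Finset V} (hs : s.card < k) : ∃ y, G.Adj x y ∧ y ∉ s := by
  rw [← hreg x, ← card_neighborFinset_eq_degree] at hs
  obtain ⟨y, hy, hys⟩ := Finset.exists_mem_notMem_of_card_lt_card hs
  exact ⟨y, (mem_neighborFinset G x y).1 hy, hys⟩

theorem IsRegularOfDegree.eq_or_eq_or_eq_of_adj (hreg : G.IsRegularOfDegree 3) {x a b c y : V}
    (ha : G.Adj x a) (hb : G.Adj x b) (hc : G.Adj x c) (hab : a ≠ b) (hac : a ≠ c) (hbc : b ≠ c)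
    (hy : G.Adj x y) : y = a ∨ y = b ∨ y = c := by
  classical
  have hnbr : G.neighborFinset x = {a, b, c} :=
    hreg.neighborFinset_eq_of_card_eq (by simp [ha, hb, hc])
      (Finset.card_eq_three.2 ⟨a, b, c, hab, hac, hbc, rfl⟩)
  simpa [hnbr] using (mem_neighborFinset G x y).2 hy

theorem IsRegularOfDegree.mem_of_adj_of_isNClique [DecidableEq V]
    (hreg : G.IsRegularOfDegree k) {s : Finset V} (hs : G.IsNClique (k + 1) s)
    {x y : V} (hx : x ∈ s) (hxy : G.Adj x y) : y ∈ s := by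
  have hnbr : G.neighborFinset x = s.erase x :=
    hreg.neighborFinset_eq_of_card_eq
      (fun y hy => hs.isClique hx (Finset.mem_of_mem_erase hy) (Finset.ne_of_mem_erase hy).symm)
      (by rw [Finset.card_erase_of_mem hx, hs.card_eq, Nat.add_sub_cancel])
  have hy : y ∈ G.neighborFinset x := (mem_neighborFinset G x y).2 hxy
  exact Finset.mem_of_mem_erase (hnbr ▸ hy)

theorem IsRegularOfDegree.mem_of_reachable_of_isNClique [DecidableEq V]
    (hreg : G.IsRegularOfDegree k) {s : Finset V} (hs : G.IsNClique (k + 1) s)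
    {x y : V} (hx : x ∈ s) (hxy : G.Reachable x y) : y ∈ s := by
  obtain ⟨w⟩ := hxy
  induction w with
  | nil => exact hx
  | cons hadj _ ih => exact ih (hreg.mem_of_adj_of_isNClique hs hx hadj)

theorem FourOrdered.eq_of_adj_of_adj_of_isTriangle (hreg : G.IsRegularOfDegree 3) (hord : G.FourOrdered) {a b c a' b' : V}
    (hab : G.Adj a b) (hac : G.Adj a c) (hbc : G.Adj b c)
    (haa' : G.Adj a a') (ha'b : a' ≠ b) (ha'c : a' ≠ c)
    (hbb' : G.Adj b b') (hb'a : b' ≠ a) (hb'c : b' ≠ c) : a' = b' := by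
  by_contra hne
  obtain ⟨p, q, r, s, hcyc⟩ := hord a' a b' b haa'.ne' hne ha'b hb'a.symm hab.ne hbb'.ne'
  have hnd := hcyc.tail_support_nodup_of_append₄
  simp only [List.nodup_append, List.mem_append] at hnd
  obtain ⟨-, ⟨-, -, hq⟩, hp⟩ := hnd
  have hq_nil : ¬q.Nil := Walk.not_nil_of_ne hb'a.symm
  have hs_nil : ¬s.Nil := Walk.not_nil_of_ne ha'b.symm
  have ha : a ∈ p.support.tail := Walk.end_mem_tail_support_of_ne haa'.ne' p
  have hb' : b' ∈ q.support.tail := q.end_mem_tail_support hq_nil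
  have hb : b ∈ r.support.tail := Walk.end_mem_tail_support_of_ne hbb'.ne' r
  have ha' : a' ∈ s.support.tail := s.end_mem_tail_support hs_nil
  have hq_snd := q.snd_mem_tail_support hq_nil
  have hs_snd := s.snd_mem_tail_support hs_nil
  have hq_adj := hreg.eq_or_eq_or_eq_of_adj hab hac haa' hbc.ne ha'b.symm ha'c.symm
    (q.adj_snd hq_nil)
  have hs_adj := hreg.eq_or_eq_or_eq_of_adj hab.symm hbc hbb' hac.ne hb'a.symm hb'c.symm
    (s.adj_snd hs_nil)
  -- The segment from `a` to `b'` leaves `a` through `c`, as `b` and `a'` lie on other segments.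
  have hc : c ∈ q.support.tail := by
    rcases hq_adj with h | h | h
    · exact (hq _ hq_snd _ (.inl hb) h).elim
    · exact h ▸ hq_snd
    · exact (hq _ hq_snd _ (.inr ha') h).elim
  rcases hs_adj with h | h | h
  · exact hp _ ha _ (.inr (.inr hs_snd)) h.symm
  · exact hq _ hc _ (.inr hs_snd) h.symm
  · exact hq _ hb' _ (.inr hs_snd) h.symm

end Regular

end SimpleGraph

open SimpleGraph

theorem cubic_fourOrdered_triangleFree {V : Type*} [Fintype V]
    (G : SimpleGraph V) [DecidableRel G.Adj]
    (hreg : G.IsRegularOfDegree 3) (hord : G.FourOrdered)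
    (hcard : 4 < Fintype.card V) : G.CliqueFree 3 := by
  classical
  intro t ht
  obtain ⟨x, y, z, hxy, hxz, hyz, rfl⟩ := is3Clique_iff.1 ht
  have hsmall : ∀ u v : V, ({u, v} : Finset V).card < 3 :=
    fun u v => (Finset.card_le_two).trans_lt (by norm_num)
  obtain ⟨w, hxw, hw⟩ := hreg.exists_adj_notMem x (hsmall y z)
  obtain ⟨w', hyw', hw'⟩ := hreg.exists_adj_notMem y (hsmall x z)
  obtain ⟨w'', hzw'', hw''⟩ := hreg.exists_adj_notMem z (hsmall x y)
  simp only [Finset.mem_insert, Finset.mem_singleton, not_or] at hw hw' hw''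
  have hww' := hord.eq_of_adj_of_adj_of_isTriangle hreg hxy hxz hyz hxw hw.1 hw.2 hyw' hw'.1 hw'.2
  have hww'' :=
    hord.eq_of_adj_of_adj_of_isTriangle hreg hxz hxy hyz.symm hxw hw.2 hw.1 hzw'' hw''.1 hw''.2
  subst hww' hww''
  have hK4 : G.IsNClique 4 (insert w {x, y, z}) :=
    ht.insert (by simp [hxw.symm, hyw'.symm, hzw''.symm])
  obtain ⟨u, -, hu⟩ := Finset.exists_mem_notMem_of_card_lt_card
    (hK4.card_eq.trans_lt (hcard.trans_eq Finset.card_univ.symm))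
  simp only [Finset.mem_insert, Finset.mem_singleton, not_or] at hu
  obtain ⟨p, -⟩ := hord x u y z (Ne.symm hu.2.1) hxy.ne hxz.ne hu.2.2.1 hu.2.2.2 hyz.ne
  exact absurd (hreg.mem_of_reachable_of_isNClique hK4 (by simp) p.reachable) (by simpa using hu)
end

section
/- If G is a 3-regular 4-ordered simple graph on more than 6 vertices, then every vertex of G has exactly 6 vertices at distance 2. -/
namespace SimpleGraph

variable {V : Type*} {G : SimpleGraph V}

lemma dist_eq_two_iff {u v : V} :
    G.dist u v = 2 ↔ u ≠ v ∧ ¬G.Adj u v ∧ (G.commonNeighbors u v).Nonempty := by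
  rw [dist, ENat.toNat_eq_iff two_ne_zero]
  exact edist_eq_two_iff

lemma neighborFinset_eq_of_subset {a : V} [Fintype (G.neighborSet a)] {s : Finset V}
    (hs : s ⊆ G.neighborFinset a) (hcard : G.degree a ≤ s.card) : G.neighborFinset a = s :=
  (Finset.eq_of_subset_of_card_le hs (by rwa [card_neighborFinset_eq_degree])).symm

lemma eq_or_eq_or_eq_of_adj_of_degree_le_three {a b₁ b₂ b₃ c : V} [Fintype (G.neighborSet a)]
    (hdeg : G.degree a ≤ 3) (h₁ : G.Adj a b₁) (h₂ : G.Adj a b₂) (h₃ : G.Adj a b₃)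
    (h₁₂ : b₁ ≠ b₂) (h₁₃ : b₁ ≠ b₃) (h₂₃ : b₂ ≠ b₃) (hc : G.Adj a c) :
    c = b₁ ∨ c = b₂ ∨ c = b₃ := by
  classical
  have hsub : {b₁, b₂, b₃} ⊆ G.neighborFinset a := by
    simp [Finset.insert_subset_iff, h₁, h₂, h₃]
  have hnbr := neighborFinset_eq_of_subset hsub <| by
    rwa [Finset.card_eq_three.mpr ⟨_, _, _, h₁₂, h₁₃, h₂₃, rfl⟩]
  have hc' := (G.mem_neighborFinset a c).mpr hc
  rw [hnbr] at hc'
  simpa using hc'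

lemma exists_adj_ne_ne_of_three_le_degree {a : V} [Fintype (G.neighborSet a)]
    (hdeg : 3 ≤ G.degree a) (b₁ b₂ : V) : ∃ c, G.Adj a c ∧ c ≠ b₁ ∧ c ≠ b₂ := by
  classical
  obtain ⟨c, hc, hcb⟩ := Finset.exists_mem_notMem_of_card_lt_card (s := {b₁, b₂})
    (t := G.neighborFinset a) (by grw [Finset.card_le_two, card_neighborFinset_eq_degree]; omega)
  simp only [Finset.mem_insert, Finset.mem_singleton, not_or] at hcb
  exact ⟨c, (G.mem_neighborFinset a c).mp hc, hcb⟩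

lemma _root_.Finset.exists_two_notMem_of_card_add_two_le {α : Type*} [Fintype α] [DecidableEq α]
    {s : Finset α} (h : s.card + 2 ≤ Fintype.card α) : ∃ a b, a ∉ s ∧ b ∉ s ∧ a ≠ b := by
  have hcompl : 1 < sᶜ.card := by rw [Finset.card_compl]; omega
  obtain ⟨a, ha, b, hb, hab⟩ := Finset.one_lt_card.mp hcompl
  exact ⟨a, b, Finset.mem_compl.mp ha, Finset.mem_compl.mp hb, hab⟩

lemma Walk.IsCycle.support_inter_of_append {v₁ v₂ v₃ v₄ : V} {p : G.Walk v₁ v₂}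
    {q : G.Walk v₂ v₃} {r : G.Walk v₃ v₄} {s : G.Walk v₄ v₁}
    (hc : (p.append (q.append (r.append s))).IsCycle)
    (h₁₂ : v₁ ≠ v₂) (h₂₃ : v₂ ≠ v₃) (h₃₄ : v₃ ≠ v₄) (h₄₁ : v₄ ≠ v₁) :
    (∀ u ∈ p.support, u ∈ q.support → u = v₂) ∧ (∀ u ∈ q.support, u ∈ r.support → u = v₃) ∧
    (∀ u ∈ r.support, u ∈ s.support → u = v₄) ∧ (∀ u ∈ s.support, u ∈ p.support → u = v₁) ∧
    (∀ u ∈ p.support, u ∉ r.support) ∧ (∀ u ∈ q.support, u ∉ s.support) := by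
  have hnodup := hc.support_nodup
  simp only [Walk.tail_support_append, List.nodup_append, List.mem_append] at hnodup
  have e₂ := p.end_mem_tail_support_of_ne h₁₂
  have e₃ := q.end_mem_tail_support_of_ne h₂₃
  have e₄ := r.end_mem_tail_support_of_ne h₃₄
  have e₁ := s.end_mem_tail_support_of_ne h₄₁
  simp only [Walk.mem_support_iff]
  grind

theorem Preconnected.card_le_of_forall_adj [Fintype V] [DecidableRel G.Adj] {d : ℕ}
    (hconn : G.Preconnected) (hreg : G.IsRegularOfDegree d) (hd : 0 < d) {A B : Finset V}
    (hA : A.card = d) (hB : B.card = d) (hAB : ∀ a ∈ A, ∀ b ∈ B, G.Adj a b) :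
    Fintype.card V ≤ 2 * d := by
  classical
  have hnbrA : ∀ a ∈ A, G.neighborFinset a = B := fun a ha =>
    neighborFinset_eq_of_subset (fun b hb => (G.mem_neighborFinset a b).mpr (hAB a ha b hb))
      (by rw [hreg a, hB])
  have hnbrB : ∀ b ∈ B, G.neighborFinset b = A := fun b hb =>
    neighborFinset_eq_of_subset (fun a ha => (G.mem_neighborFinset b a).mpr (hAB a ha b hb).symm)
      (by rw [hreg b, hA])
  have hclosed : ∀ x ∈ A ∪ B, ∀ y, G.Adj x y → y ∈ A ∪ B := by
    intro x hx y hxy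
    rw [← G.mem_neighborFinset] at hxy
    rcases Finset.mem_union.mp hx with hx | hx
    · exact Finset.mem_union_right _ (hnbrA x hx ▸ hxy)
    · exact Finset.mem_union_left _ (hnbrB x hx ▸ hxy)
  obtain ⟨a, ha⟩ := Finset.card_pos.mp (hA ▸ hd)
  have huniv : ∀ w, w ∈ A ∪ B := by
    intro w
    by_contra hw
    obtain ⟨e, -, he, he'⟩ := (hconn a w).some.exists_boundary_dart (A ∪ B : Finset V)
      (Finset.mem_union_left _ ha) hw
    exact he' (hclosed _ he _ e.adj)
  calc Fintype.card V ≤ (A ∪ B).card := Finset.card_le_card fun w _ => huniv w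
    _ ≤ A.card + B.card := Finset.card_union_le A B
    _ = 2 * d := by omega

theorem ncard_dist_eq_two [Fintype V] [DecidableRel G.Adj] {d : ℕ}
    (hreg : G.IsRegularOfDegree d) (htri : G.CliqueFree 3)
    (hsq : ∀ v u, v ≠ u → (G.commonNeighbors v u).Subsingleton) (v : V) :
    {u | G.dist v u = 2}.ncard = d * (d - 1) := by
  classical
  have hset : {u | G.dist v u = 2}
      = ↑((G.neighborFinset v).biUnion fun x => (G.neighborFinset x).erase v) := by
    ext u
    simp only [Set.mem_ofPred_eq, dist_eq_two_iff, Finset.coe_biUnion, Finset.mem_coe,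
      mem_neighborFinset, Finset.coe_erase, Set.mem_iUnion, Set.mem_sdiff, Set.mem_singleton_iff,
      exists_prop, Set.Nonempty, mem_commonNeighbors]
    constructor
    · rintro ⟨hvu, -, x, hvx, hux⟩
      exact ⟨x, hvx, hux.symm, Ne.symm hvu⟩
    · rintro ⟨x, hvx, hxu, huv⟩
      exact ⟨Ne.symm huv, G.isIndepSet_neighborSet_of_triangleFree htri x hvx.symm hxu
        (Ne.symm huv), x, hvx, hxu.symm⟩
  rw [hset, Set.ncard_coe_finset, Finset.card_biUnion]
  · rw [Finset.sum_congr rfl fun x hx => ?_, Finset.sum_const, card_neighborFinset_eq_degree,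
      hreg v, smul_eq_mul]
    rw [Finset.card_erase_of_mem (by simpa using ((G.mem_neighborFinset v x).mp hx).symm),
      card_neighborFinset_eq_degree, hreg x]
  · intro x hx y hy hxy
    rw [Function.onFun, Finset.disjoint_left]
    intro u hux huy
    simp only [Finset.mem_erase, mem_neighborFinset] at hux huy
    exact hxy (hsq v u (Ne.symm hux.1) ⟨(G.mem_neighborFinset v x).mp hx, hux.2.symm⟩
      ⟨(G.mem_neighborFinset v y).mp hy, huy.2.symm⟩)

theorem FourOrdered.preconnected [Fintype V] (hord : G.FourOrdered)
    (hcard : 4 ≤ Fintype.card V) : G.Preconnected := by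
  classical
  intro v w
  obtain rfl | hvw := eq_or_ne v w
  · rfl
  obtain ⟨a, b, ha, hb, hab⟩ := Finset.exists_two_notMem_of_card_add_two_le (s := {v, w})
    (by grw [Finset.card_le_two]; omega)
  simp only [Finset.mem_insert, Finset.mem_singleton, not_or] at ha hb
  obtain ⟨p, q, -⟩ := hord v a w b (Ne.symm ha.1) hvw (Ne.symm hb.1) ha.2 hab (Ne.symm hb.2)
  exact ⟨p.append q⟩

section FourOrdered

variable [Fintype V] [DecidableRel G.Adj]

theorem FourOrdered.cliqueFree_three (hord : G.FourOrdered) (hdeg : ∀ v, G.degree v ≤ 3)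
    (hcard : 5 ≤ Fintype.card V) : G.CliqueFree 3 := by
  classical
  intro t ht
  obtain ⟨x, y, z, -, -, -, rfl⟩ := Finset.card_eq_three.mp ht.card_eq
  obtain ⟨hxy, hxz, hyz⟩ := is3Clique_triple_iff.mp ht
  obtain ⟨w₁, w₂, hw₁, hw₂, hw⟩ := Finset.exists_two_notMem_of_card_add_two_le (s := {x, y, z})
    (by grw [Finset.card_le_three]; omega)
  simp only [Finset.mem_insert, Finset.mem_singleton, not_or] at hw₁ hw₂
  obtain ⟨hw₁x, hw₁y, hw₁z⟩ := hw₁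
  obtain ⟨hw₂x, hw₂y, hw₂z⟩ := hw₂
  obtain ⟨p, q, r, s, hc⟩ := hord x w₁ y w₂ (Ne.symm hw₁x) hxy.ne (Ne.symm hw₂x) hw₁y hw
    (Ne.symm hw₂y)
  obtain ⟨hpq, hqr, hrs, hsp, hpr, hqs⟩ :=
    hc.support_inter_of_append (Ne.symm hw₁x) hw₁y (Ne.symm hw₂y) hw₂x
  have hp : ¬p.Nil := Walk.not_nil_of_ne (Ne.symm hw₁x)
  have hq : ¬q.Nil := Walk.not_nil_of_ne hw₁y
  have hr : ¬r.Nil := Walk.not_nil_of_ne (Ne.symm hw₂y)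
  have hs : ¬s.Nil := Walk.not_nil_of_ne hw₂x
  have hx₁ := p.adj_snd hp
  have hx₂ := s.adj_penultimate hs
  have hy₁ := q.adj_penultimate hq
  have hy₂ := r.adj_snd hr
  -- `y` is not next to `x` on the cycle, hence `z` is next to both `x` and `y`
  have hzx := eq_or_eq_or_eq_of_adj_of_degree_le_three (hdeg x) hxy hx₁ hx₂.symm ?_ ?_ ?_ hxz
  have hzy :=
    eq_or_eq_or_eq_of_adj_of_degree_le_three (hdeg y) hxy.symm hy₁.symm hy₂ ?_ ?_ ?_ hyz
  all_goals
    grind [Walk.start_mem_support, Walk.end_mem_support, Walk.getVert_mem_support, Adj.ne]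

theorem FourOrdered.third_neighbor_eq (hord : G.FourOrdered) {a b m n a₃ b₃ : V}
    (ha : G.degree a ≤ 3) (hb : G.degree b ≤ 3) (hab : a ≠ b) (hnadj : ¬G.Adj a b)
    (hm : m ∈ G.commonNeighbors a b) (hn : n ∈ G.commonNeighbors a b) (hmn : m ≠ n)
    (ha₃ : G.Adj a a₃) (ha₃m : a₃ ≠ m) (ha₃n : a₃ ≠ n)
    (hb₃ : G.Adj b b₃) (hb₃m : b₃ ≠ m) (hb₃n : b₃ ≠ n) : a₃ = b₃ := by
  by_contra h₃₃
  have hab₃ : a ≠ b₃ := by rintro rfl; exact hnadj hb₃.symm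
  have hba₃ : b ≠ a₃ := by rintro rfl; exact hnadj ha₃
  obtain ⟨p, q, r, s, hc⟩ := hord a b a₃ b₃ hab ha₃.ne hab₃ hba₃ hb₃.ne h₃₃
  obtain ⟨hpq, hqr, -, hsp, -, hqs⟩ := hc.support_inter_of_append hab hba₃ h₃₃ hab₃.symm
  have ha₁ := p.adj_snd (Walk.not_nil_of_ne hab)
  have ha₂ := s.adj_penultimate (Walk.not_nil_of_ne hab₃.symm)
  have hb₁ := q.adj_snd (Walk.not_nil_of_ne hba₃)
  rw [mem_commonNeighbors] at hm hn
  -- these three cycle-neighbours lie on different arcs, yet all of them are in `{m, n}`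
  have h₁ := eq_or_eq_or_eq_of_adj_of_degree_le_three ha hm.1 hn.1 ha₃ hmn ha₃m.symm ha₃n.symm
    ha₁
  have h₂ := eq_or_eq_or_eq_of_adj_of_degree_le_three ha hm.1 hn.1 ha₃ hmn ha₃m.symm ha₃n.symm
    ha₂.symm
  have h₃ := eq_or_eq_or_eq_of_adj_of_degree_le_three hb hm.2 hn.2 hb₃ hmn hb₃m.symm hb₃n.symm
    hb₁
  grind [Walk.start_mem_support, Walk.end_mem_support, Walk.getVert_mem_support, Adj.ne]

theorem FourOrdered.commonNeighbors_subsingleton (hord : G.FourOrdered)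
    (hreg : G.IsRegularOfDegree 3) (hcard : 6 < Fintype.card V) {v u : V} (hvu : v ≠ u) :
    (G.commonNeighbors v u).Subsingleton := by
  intro x hx y hy
  by_contra hxy
  obtain ⟨hvx, hux⟩ := G.mem_commonNeighbors.mp hx
  obtain ⟨hvy, huy⟩ := G.mem_commonNeighbors.mp hy
  have htri := hord.cliqueFree_three (fun w => (hreg w).le) (by omega)
  have hvu' : ¬G.Adj v u := G.isIndepSet_neighborSet_of_triangleFree htri x hvx.symm hux.symm hvu
  have hxy' : ¬G.Adj x y := G.isIndepSet_neighborSet_of_triangleFree htri v hvx hvy hxy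
  obtain ⟨z, hvz, hzx, hzy⟩ := exists_adj_ne_ne_of_three_le_degree (hreg v).ge x y
  obtain ⟨z', huz', hz'x, hz'y⟩ := exists_adj_ne_ne_of_three_le_degree (hreg u).ge x y
  obtain ⟨w, hxw, hwv, hwu⟩ := exists_adj_ne_ne_of_three_le_degree (hreg x).ge v u
  obtain ⟨w', hyw', hw'v, hw'u⟩ := exists_adj_ne_ne_of_three_le_degree (hreg y).ge v u
  obtain rfl : z = z' := hord.third_neighbor_eq (hreg v).le (hreg u).le hvu hvu' hx hy hxy
    hvz hzx hzy huz' hz'x hz'y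
  obtain rfl : w = w' := hord.third_neighbor_eq (hreg x).le (hreg y).le hxy hxy'
    ⟨hvx.symm, hvy.symm⟩ ⟨hux.symm, huy.symm⟩ hvu hxw hwv hwu hyw' hw'v hw'u
  obtain ⟨t, hzt, htv, htu⟩ := exists_adj_ne_ne_of_three_le_degree (hreg z).ge v u
  obtain rfl : t = w := hord.third_neighbor_eq (hreg z).le (hreg x).le hzx
    (G.isIndepSet_neighborSet_of_triangleFree htri v hvz hvx hzx) ⟨hvz.symm, hvx.symm⟩
    ⟨huz'.symm, hux.symm⟩ hvu hzt htv htu hxw hwv hwu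
  -- `{v, u, t}` and `{x, y, z}` span a `K₃,₃`
  classical
  have := (hord.preconnected (by omega)).card_le_of_forall_adj hreg (by norm_num)
    (A := {v, u, t}) (B := {x, y, z})
    (Finset.card_eq_three.mpr ⟨_, _, _, hvu, htv.symm, htu.symm, rfl⟩)
    (Finset.card_eq_three.mpr ⟨_, _, _, hxy, hzx.symm, hzy.symm, rfl⟩) (by simp [*, Adj.symm])
  omega

end FourOrdered

end SimpleGraph

theorem cubic_fourOrdered_six_at_distance_two {V : Type*} [Fintype V]
    (G : SimpleGraph V) [DecidableRel G.Adj]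
    (hreg : G.IsRegularOfDegree 3) (hord : G.FourOrdered)
    (hcard : 6 < Fintype.card V) :
    ∀ v : V, {u : V | G.dist v u = 2}.ncard = 6 :=
  SimpleGraph.ncard_dist_eq_two hreg (hord.cliqueFree_three (fun v => (hreg v).le) (by omega))
    (fun _ _ h => hord.commonNeighbors_subsingleton hreg hcard h)
end

section
/- The Petersen graph is 4-ordered: for any sequence of 4 distinct vertices v1, v2, v3, v4 of the Petersen graph, there exists a cycle containing these 4 vertices in the specified order. -/
/-- The Petersen graph as the Kneser graph `K(5,2)`: vertices are the
2-element subsets of a 5-element set, adjacent iff disjoint. -/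
def petersenGraph : SimpleGraph {s : Finset (Fin 5) // s.card = 2} :=
  SimpleGraph.fromRel (fun a b => Disjoint a.1 b.1)

open scoped List

namespace SimpleGraph

variable {V W : Type*} {G : SimpleGraph V} {G' : SimpleGraph W}

theorem Walk.exists_eq_append_of_cons_sublist_support {u v x : V} {l : List V} :
    ∀ w : G.Walk u v, x :: l <+ w.support →
      ∃ (p : G.Walk u x) (q : G.Walk x v), w = p.append q ∧ l <+ q.support
  | nil, h => by
    obtain ⟨rfl, rfl⟩ : x = u ∧ l = [] := by simpa using h
    exact ⟨nil, nil, rfl, List.nil_sublist _⟩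
  | cons hadj w, h => by
    rcases List.sublist_cons_iff.mp h with h | ⟨r, ⟨rfl, rfl⟩, hr⟩
    · obtain ⟨p, q, rfl, hq⟩ := w.exists_eq_append_of_cons_sublist_support h
      exact ⟨cons hadj p, q, rfl, hq⟩
    · exact ⟨nil, cons hadj w, rfl, hr.trans (List.sublist_cons_self _ _)⟩

theorem Walk.IsCycle.cycleInOrder4 {a b c d : V} {w : G.Walk a a} (hw : w.IsCycle)
    (h : [b, c, d] <+ w.support) : G.CycleInOrder4 a b c d := by
  obtain ⟨p, w₁, rfl, h₁⟩ := w.exists_eq_append_of_cons_sublist_support h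
  obtain ⟨q, w₂, rfl, h₂⟩ := w₁.exists_eq_append_of_cons_sublist_support h₁
  obtain ⟨r, s, rfl, -⟩ := w₂.exists_eq_append_of_cons_sublist_support h₂
  exact ⟨p, q, r, s, hw⟩

theorem cycleInOrder4_of_isChain {a b c d : V} {l : List V}
    (hchain : (a :: l ++ [a]).IsChain G.Adj) (hnodup : (a :: l).Nodup) (hlen : 2 ≤ l.length)
    (h : [b, c, d] <+ l) : G.CycleInOrder4 a b c d := by
  let w : G.Walk a a :=
    (Walk.ofSupport (a :: (l ++ [a])) (List.cons_ne_nil _ _) hchain).copy rfl (by simp)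
  have hsupport : w.support = a :: (l ++ [a]) :=
    (Walk.support_copy ..).trans (Walk.support_ofSupport _ _)
  have hlength : 3 ≤ w.length := by
    have := w.length_support
    rw [hsupport] at this
    simp only [List.length_cons, List.length_append] at this
    omega
  refine Walk.IsCycle.cycleInOrder4 ?_ (h.trans (by rw [hsupport]; simp))
  rw [Walk.isCycle_iff_isPath_tail_and_le_length, Walk.isPath_def,
    Walk.support_tail_of_not_nil _ (by rw [Walk.not_nil_iff_lt_length]; omega), hsupport]
  exact ⟨(List.perm_append_singleton a l).nodup_iff.mpr hnodup, hlength⟩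

theorem CycleInOrder4.map {a b c d : V} (f : G ↪g G') (h : G.CycleInOrder4 a b c d) :
    G'.CycleInOrder4 (f a) (f b) (f c) (f d) := by
  obtain ⟨p, q, r, s, hc⟩ := h
  refine ⟨p.map f.toHom, q.map f.toHom, r.map f.toHom, s.map f.toHom, ?_⟩
  simpa only [Walk.map_append] using hc.map f.injective

theorem FourOrdered.of_iso (e : G ≃g G') (h : G.FourOrdered) : G'.FourOrdered := by
  intro a b c d hab hac had hbc hbd hcd
  simpa using (h (e.symm a) (e.symm b) (e.symm c) (e.symm d) (by simpa) (by simpa) (by simpa)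
    (by simpa) (by simpa) (by simpa)).map e.toEmbedding

end SimpleGraph

def List.traversalsFrom {α : Type*} [DecidableEq α] (a : α) (C : List α) : List (List α) :=
  let t := (C.rotate (C.idxOf a)).tail
  [t, t.reverse]

instance : DecidableRel petersenGraph.Adj := fun a b =>
  inferInstanceAs (Decidable (a ≠ b ∧ (Disjoint a.1 b.1 ∨ Disjoint b.1 a.1)))

/-- The standard drawing: `0, …, 4` is the outer pentagon, `i + 5` is the inner neighbour of `i`,
and the inner pentagram joins `i + 5` to `(i + 2) % 5 + 5`. -/
def petersenLabel : Fin 10 → {s : Finset (Fin 5) // s.card = 2}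
  | 0 => ⟨{0, 1}, rfl⟩
  | 1 => ⟨{2, 3}, rfl⟩
  | 2 => ⟨{0, 4}, rfl⟩
  | 3 => ⟨{1, 2}, rfl⟩
  | 4 => ⟨{3, 4}, rfl⟩
  | 5 => ⟨{2, 4}, rfl⟩
  | 6 => ⟨{1, 4}, rfl⟩
  | 7 => ⟨{1, 3}, rfl⟩
  | 8 => ⟨{0, 3}, rfl⟩
  | 9 => ⟨{0, 2}, rfl⟩

noncomputable def petersenLabelEquiv : Fin 10 ≃ {s : Finset (Fin 5) // s.card = 2} :=
  Equiv.ofBijective petersenLabel ⟨by unfold Function.Injective; decide, by decide⟩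

def petersenRotate (v : Fin 10) : Fin 10 := 5 * (v / 5) + (v + 1) % 5

/-- The 9- and 8-cycles (each list closing up from its last vertex to its first), as the rotations
of the drawing of seven representatives. They are checked to be cycles below, so nothing about
`petersenRotate` needs proof. -/
def petersenLongCycles : List (List (Fin 10)) :=
  [[0, 1, 2, 3, 4, 9, 6, 8, 5], [0, 1, 2, 3, 8, 6, 9, 7, 5], [0, 1, 2, 7, 9, 4, 3, 8, 5],
    [0, 1, 6, 8, 3, 4, 9, 7, 5], [0, 1, 2, 3, 4, 9, 7, 5], [0, 1, 2, 7, 9, 6, 8, 5],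
    [0, 1, 6, 8, 3, 2, 7, 5]].flatMap fun C => (List.range 5).map fun k => C.map petersenRotate^[k]

theorem petersenLongCycles_traversalsFrom : ∀ C ∈ petersenLongCycles, ∀ a ∈ C,
    ∀ l ∈ C.traversalsFrom a,
      (a :: l ++ [a]).IsChain (petersenGraph.comap petersenLabelEquiv).Adj ∧ (a :: l).Nodup ∧
        2 ≤ l.length := by
  decide +kernel

theorem exists_petersenLongCycles_traversalsFrom : ∀ a b c d : Fin 10,
    a ≠ b → a ≠ c → a ≠ d → b ≠ c → b ≠ d → c ≠ d →
      ∃ C ∈ petersenLongCycles, a ∈ C ∧ ∃ l ∈ C.traversalsFrom a, [b, c, d] <+ l := by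
  decide +kernel

theorem petersen_fourOrdered : petersenGraph.FourOrdered := by
  refine .of_iso (.comap petersenLabelEquiv petersenGraph) ?_
  intro a b c d hab hac had hbc hbd hcd
  obtain ⟨C, hC, haC, l, hl, hsub⟩ :=
    exists_petersenLongCycles_traversalsFrom a b c d hab hac had hbc hbd hcd
  obtain ⟨hchain, hnodup, hlen⟩ := petersenLongCycles_traversalsFrom C hC a haC l hl
  exact SimpleGraph.cycleInOrder4_of_isChain hchain hnodup hlen hsub
end

section
/- Up to isomorphism, the Petersen graph is the unique 3-regular triangle-free and square-free simple graph on 10 vertices. -/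
open SimpleGraph Finset

lemma card3' {V : Type*} [DecidableEq V] {x y z : V} (h : ({x,y,z} : Finset V).card = 3) :
    x ≠ y ∧ x ≠ z ∧ y ≠ z := by
  refine ⟨?_, ?_, ?_⟩ <;> rintro rfl <;> simp at h <;>
    [(have := Finset.card_insert_le x {z}; simp at this; omega);
     (have := Finset.card_insert_le y {x}; simp at this; omega);
     (have := Finset.card_insert_le x {y}; simp at this; omega)]

lemma nbrs3 {V : Type*} [Fintype V] [DecidableEq V] (G : SimpleGraph V) [DecidableRel G.Adj]
    {x n1 n2 n3 : V} (h3 : (G.neighborFinset x).card = 3)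
    (h12 : n1 ≠ n2) (h13 : n1 ≠ n3) (h23 : n2 ≠ n3)
    (a1 : G.Adj x n1) (a2 : G.Adj x n2) (a3 : G.Adj x n3) :
    ∀ y, G.Adj x y ↔ (y = n1 ∨ y = n2 ∨ y = n3) := by
  have hsub : ({n1,n2,n3} : Finset V) ⊆ G.neighborFinset x := by
    intro w hw; simp at hw
    rcases hw with rfl|rfl|rfl <;> simpa [mem_neighborFinset]
  have hcard : (G.neighborFinset x).card ≤ ({n1,n2,n3} : Finset V).card := by
    rw [h3, Finset.card_insert_of_notMem (by simp [h12, h13]),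
      Finset.card_insert_of_notMem (by simp [h23]), Finset.card_singleton]
  have heq := Finset.eq_of_subset_of_card_le hsub hcard
  intro y
  rw [← mem_neighborFinset, ← heq]; simp

def petVec : Fin 10 → {s : Finset (Fin 5) // s.card = 2} :=
  ![⟨{0,1}, by decide⟩, ⟨{2,3}, by decide⟩, ⟨{2,4}, by decide⟩, ⟨{3,4}, by decide⟩,
    ⟨{0,4}, by decide⟩, ⟨{1,4}, by decide⟩, ⟨{1,3}, by decide⟩, ⟨{0,3}, by decide⟩,
    ⟨{1,2}, by decide⟩, ⟨{0,2}, by decide⟩]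

lemma petVec_bij : Function.Bijective petVec := by decide

def pmat : Fin 10 → Fin 10 → Bool :=
  ![![false,true,true,true,false,false,false,false,false,false],
    ![true,false,false,false,true,true,false,false,false,false],
    ![true,false,false,false,false,false,true,true,false,false],
    ![true,false,false,false,false,false,false,false,true,true],
    ![false,true,false,false,false,false,true,false,true,false],
    ![false,true,false,false,false,false,false,true,false,true],
    ![false,false,true,false,true,false,false,false,false,true],
    ![false,false,true,false,false,true,false,false,true,false],
    ![false,false,false,true,true,false,false,true,false,false],
    ![false,false,false,true,false,true,true,false,false,false]]

instance inst_s15 : DecidableRel petersenGraph.Adj := fun a b =>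
  decidable_of_iff (a ≠ b ∧ (Disjoint a.1 b.1 ∨ Disjoint b.1 a.1))
    (by simp [petersenGraph, SimpleGraph.fromRel_adj])

lemma hpet : ∀ i j, petersenGraph.Adj (petVec i) (petVec j) ↔ pmat i j = true := by decide

lemma petersen_aux {V : Type*} [Fintype V] [DecidableEq V] (G : SimpleGraph V)
    [DecidableRel G.Adj]
    (hcard : Fintype.card V = 10) (hreg : G.IsRegularOfDegree 3)
    (tri : ∀ x y z : V, G.Adj x y → G.Adj x z → G.Adj y z → False)
    (sq : ∀ x u y v : V, x ≠ y → u ≠ v → G.Adj x u → G.Adj u y → G.Adj y v → G.Adj v x → False)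
    (v0 a b c a1 a2 b1 b2 c1 c2 : V)
    (hN0 : G.neighborFinset v0 = {a,b,c})
    (hNa : G.neighborFinset a = {v0,a1,a2})
    (hNb : G.neighborFinset b = {v0,b1,b2})
    (hNc : G.neighborFinset c = {v0,c1,c2})
    (hU : ∀ x : V, x = v0 ∨ x = a ∨ x = b ∨ x = c ∨ x = a1 ∨ x = a2 ∨
      x = b1 ∨ x = b2 ∨ x = c1 ∨ x = c2)
    (hab1 : G.Adj a1 b1) (hac1 : G.Adj a1 c1) :
    Nonempty (G ≃g petersenGraph) := by
  obtain ⟨hab, hac, hbc⟩ := card3' (show ({a,b,c} : Finset V).card = 3 by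
    rw [← hN0]; exact hreg v0)
  obtain ⟨h0a1, h0a2, ha12⟩ := card3' (show ({v0,a1,a2} : Finset V).card = 3 by
    rw [← hNa]; exact hreg a)
  obtain ⟨h0b1, h0b2, hb12⟩ := card3' (show ({v0,b1,b2} : Finset V).card = 3 by
    rw [← hNb]; exact hreg b)
  obtain ⟨h0c1, h0c2, hc12⟩ := card3' (show ({v0,c1,c2} : Finset V).card = 3 by
    rw [← hNc]; exact hreg c)
  -- adjacency iff for the four centers
  have hA0 : ∀ y, G.Adj v0 y ↔ (y = a ∨ y = b ∨ y = c) := by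
    intro y; rw [← mem_neighborFinset, hN0]; simp
  have hAa : ∀ y, G.Adj a y ↔ (y = v0 ∨ y = a1 ∨ y = a2) := by
    intro y; rw [← mem_neighborFinset, hNa]; simp
  have hAb : ∀ y, G.Adj b y ↔ (y = v0 ∨ y = b1 ∨ y = b2) := by
    intro y; rw [← mem_neighborFinset, hNb]; simp
  have hAc : ∀ y, G.Adj c y ↔ (y = v0 ∨ y = c1 ∨ y = c2) := by
    intro y; rw [← mem_neighborFinset, hNc]; simp
  have av0a : G.Adj v0 a := (hA0 a).mpr (Or.inl rfl)
  have av0b : G.Adj v0 b := (hA0 b).mpr (Or.inr (Or.inl rfl))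
  have av0c : G.Adj v0 c := (hA0 c).mpr (Or.inr (Or.inr rfl))
  have aaa1 : G.Adj a a1 := (hAa a1).mpr (Or.inr (Or.inl rfl))
  have aaa2 : G.Adj a a2 := (hAa a2).mpr (Or.inr (Or.inr rfl))
  have abb1 : G.Adj b b1 := (hAb b1).mpr (Or.inr (Or.inl rfl))
  have abb2 : G.Adj b b2 := (hAb b2).mpr (Or.inr (Or.inr rfl))
  have acc1 : G.Adj c c1 := (hAc c1).mpr (Or.inr (Or.inl rfl))
  have acc2 : G.Adj c c2 := (hAc c2).mpr (Or.inr (Or.inr rfl))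
  have h0a : v0 ≠ a := av0a.ne
  have h0b : v0 ≠ b := av0b.ne
  have h0c : v0 ≠ c := av0c.ne
  have haa1 : a ≠ a1 := aaa1.ne
  have haa2 : a ≠ a2 := aaa2.ne
  have hbb1 : b ≠ b1 := abb1.ne
  have hbb2 : b ≠ b2 := abb2.ne
  have hcc1 : c ≠ c1 := acc1.ne
  have hcc2 : c ≠ c2 := acc2.ne
  -- child vs other parent
  have ha1b : a1 ≠ b := by intro h; exact tri v0 a b av0a av0b (by rw [← h]; exact aaa1)
  have ha1c : a1 ≠ c := by intro h; exact tri v0 a c av0a av0c (by rw [← h]; exact aaa1)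
  have ha2b : a2 ≠ b := by intro h; exact tri v0 a b av0a av0b (by rw [← h]; exact aaa2)
  have ha2c : a2 ≠ c := by intro h; exact tri v0 a c av0a av0c (by rw [← h]; exact aaa2)
  have hb1a : b1 ≠ a := by intro h; exact tri v0 b a av0b av0a (by rw [← h]; exact abb1)
  have hb1c : b1 ≠ c := by intro h; exact tri v0 b c av0b av0c (by rw [← h]; exact abb1)
  have hb2a : b2 ≠ a := by intro h; exact tri v0 b a av0b av0a (by rw [← h]; exact abb2)
  have hb2c : b2 ≠ c := by intro h; exact tri v0 b c av0b av0c (by rw [← h]; exact abb2)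
  have hc1a : c1 ≠ a := by intro h; exact tri v0 c a av0c av0a (by rw [← h]; exact acc1)
  have hc1b : c1 ≠ b := by intro h; exact tri v0 c b av0c av0b (by rw [← h]; exact acc1)
  have hc2a : c2 ≠ a := by intro h; exact tri v0 c a av0c av0a (by rw [← h]; exact acc2)
  have hc2b : c2 ≠ b := by intro h; exact tri v0 c b av0c av0b (by rw [← h]; exact acc2)
  -- cross-children distinctness
  have na1b1 : a1 ≠ b1 := by intro h; exact sq a v0 b a1 hab h0a1 av0a.symm av0b (by rw [h]; exact abb1) aaa1.symm
  have na1b2 : a1 ≠ b2 := by intro h; exact sq a v0 b a1 hab h0a1 av0a.symm av0b (by rw [h]; exact abb2) aaa1.symm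
  have na2b1 : a2 ≠ b1 := by intro h; exact sq a v0 b a2 hab h0a2 av0a.symm av0b (by rw [h]; exact abb1) aaa2.symm
  have na2b2 : a2 ≠ b2 := by intro h; exact sq a v0 b a2 hab h0a2 av0a.symm av0b (by rw [h]; exact abb2) aaa2.symm
  have na1c1 : a1 ≠ c1 := by intro h; exact sq a v0 c a1 hac h0a1 av0a.symm av0c (by rw [h]; exact acc1) aaa1.symm
  have na1c2 : a1 ≠ c2 := by intro h; exact sq a v0 c a1 hac h0a1 av0a.symm av0c (by rw [h]; exact acc2) aaa1.symm
  have na2c1 : a2 ≠ c1 := by intro h; exact sq a v0 c a2 hac h0a2 av0a.symm av0c (by rw [h]; exact acc1) aaa2.symm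
  have na2c2 : a2 ≠ c2 := by intro h; exact sq a v0 c a2 hac h0a2 av0a.symm av0c (by rw [h]; exact acc2) aaa2.symm
  have nb1c1 : b1 ≠ c1 := by intro h; exact sq b v0 c b1 hbc h0b1 av0b.symm av0c (by rw [h]; exact acc1) abb1.symm
  have nb1c2 : b1 ≠ c2 := by intro h; exact sq b v0 c b1 hbc h0b1 av0b.symm av0c (by rw [h]; exact acc2) abb1.symm
  have nb2c1 : b2 ≠ c1 := by intro h; exact sq b v0 c b2 hbc h0b2 av0b.symm av0c (by rw [h]; exact acc1) abb2.symm
  have nb2c2 : b2 ≠ c2 := by intro h; exact sq b v0 c b2 hbc h0b2 av0b.symm av0c (by rw [h]; exact acc2) abb2.symm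
  -- degree bound helper
  have deg_le : ∀ (x u w : V), (∀ y, G.Adj x y → y = u ∨ y = w) → False := by
    intro x u w h
    have hsub : G.neighborFinset x ⊆ {u, w} := by
      intro y hy
      rw [mem_neighborFinset] at hy
      rcases h y hy with rfl|rfl <;> simp
    have hle := Finset.card_le_card hsub
    have h2 : ({u,w} : Finset V).card ≤ 2 := by
      refine le_trans (Finset.card_insert_le _ _) ?_; simp
    have h3 : (G.neighborFinset x).card = 3 := hreg x
    omega
  -- neighbors of a1
  have hNa1 : ∀ y, G.Adj a1 y ↔ (y = a ∨ y = b1 ∨ y = c1) :=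
    nbrs3 G (hreg a1) hb1a.symm hc1a.symm nb1c1 aaa1.symm hab1 hac1
  -- neighbors of a2
  have ha2nbr : ∀ w, G.Adj a2 w → w = a ∨ w = b2 ∨ w = c2 := by
    intro w hw
    rcases hU w with h|h|h|h|h|h|h|h|h|h
    · rw [h] at hw
      exact absurd ((hA0 a2).mp hw.symm)
        (by rintro (h|h|h); exacts [haa2 h.symm, ha2b h, ha2c h])
    · exact Or.inl h
    · rw [h] at hw
      exact absurd hw (fun h => sq v0 a a2 b h0a2 hab av0a aaa2 h av0b.symm)
    · rw [h] at hw
      exact absurd hw (fun h => sq v0 a a2 c h0a2 hac av0a aaa2 h av0c.symm)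
    · rw [h] at hw
      exact absurd hw.symm (fun h => tri a a1 a2 aaa1 aaa2 h)
    · rw [h] at hw
      exact absurd rfl hw.ne
    · rw [h] at hw
      exact absurd hw (fun h => sq a1 a a2 b1 ha12 hb1a.symm aaa1.symm aaa2 h hab1.symm)
    · exact Or.inr (Or.inl h)
    · rw [h] at hw
      exact absurd hw (fun h => sq a1 a a2 c1 ha12 hc1a.symm aaa1.symm aaa2 h hac1.symm)
    · exact Or.inr (Or.inr h)
  have aa2b2 : G.Adj a2 b2 := by
    by_contra hcon
    refine deg_le a2 a c2 (fun w hw => ?_)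
    rcases ha2nbr w hw with h|h|h
    · exact Or.inl h
    · exact absurd (h ▸ hw) hcon
    · exact Or.inr h
  have aa2c2 : G.Adj a2 c2 := by
    by_contra hcon
    refine deg_le a2 a b2 (fun w hw => ?_)
    rcases ha2nbr w hw with h|h|h
    · exact Or.inl h
    · exact Or.inr h
    · exact absurd (h ▸ hw) hcon
  have hNa2 : ∀ y, G.Adj a2 y ↔ (y = a ∨ y = b2 ∨ y = c2) :=
    nbrs3 G (hreg a2) hb2a.symm hc2a.symm nb2c2 aaa2.symm aa2b2 aa2c2
  -- neighbors of b1
  have hb1nbr : ∀ w, G.Adj b1 w → w = b ∨ w = a1 ∨ w = c2 := by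
    intro w hw
    rcases hU w with h|h|h|h|h|h|h|h|h|h
    · rw [h] at hw
      exact absurd ((hA0 b1).mp hw.symm)
        (by rintro (h|h|h); exacts [hb1a h, hbb1 h.symm, hb1c h])
    · rw [h] at hw
      exact absurd ((hAa b1).mp hw.symm)
        (by rintro (h|h|h); exacts [h0b1 h.symm, na1b1 h.symm, na2b1 h.symm])
    · exact Or.inl h
    · rw [h] at hw
      exact absurd hw (fun h => sq v0 b b1 c h0b1 hbc av0b abb1 h av0c.symm)
    · exact Or.inr (Or.inl h)
    · rw [h] at hw
      exact absurd ((hNa2 b1).mp hw.symm)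
        (by rintro (h|h|h); exacts [hb1a h, hb12 h, nb1c2 h])
    · rw [h] at hw
      exact absurd rfl hw.ne
    · rw [h] at hw
      exact absurd hw (fun h => tri b b1 b2 abb1 abb2 h)
    · rw [h] at hw
      exact absurd hw (fun h => tri a1 b1 c1 hab1 hac1 h)
    · exact Or.inr (Or.inr h)
  have ab1c2 : G.Adj b1 c2 := by
    by_contra hcon
    refine deg_le b1 b a1 (fun w hw => ?_)
    rcases hb1nbr w hw with h|h|h
    · exact Or.inl h
    · exact Or.inr h
    · exact absurd (h ▸ hw) hcon
  have hNb1 : ∀ y, G.Adj b1 y ↔ (y = b ∨ y = a1 ∨ y = c2) :=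
    nbrs3 G (hreg b1) ha1b.symm hc2b.symm na1c2 abb1.symm hab1.symm ab1c2
  -- neighbors of b2
  have hb2nbr : ∀ w, G.Adj b2 w → w = b ∨ w = a2 ∨ w = c1 := by
    intro w hw
    rcases hU w with h|h|h|h|h|h|h|h|h|h
    · rw [h] at hw
      exact absurd ((hA0 b2).mp hw.symm)
        (by rintro (h|h|h); exacts [hb2a h, hbb2 h.symm, hb2c h])
    · rw [h] at hw
      exact absurd ((hAa b2).mp hw.symm)
        (by rintro (h|h|h); exacts [h0b2 h.symm, na1b2 h.symm, na2b2 h.symm])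
    · exact Or.inl h
    · rw [h] at hw
      exact absurd hw (fun h => sq v0 b b2 c h0b2 hbc av0b abb2 h av0c.symm)
    · rw [h] at hw
      exact absurd ((hNa1 b2).mp hw.symm)
        (by rintro (h|h|h); exacts [hb2a h, hb12 h.symm, nb2c1 h])
    · exact Or.inr (Or.inl h)
    · rw [h] at hw
      exact absurd hw.symm (fun h => tri b b1 b2 abb1 abb2 h)
    · rw [h] at hw
      exact absurd rfl hw.ne
    · exact Or.inr (Or.inr h)
    · rw [h] at hw
      exact absurd hw (fun h => sq b1 c2 b2 b hb12 hc2b ab1c2 h.symm abb2.symm abb1)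
  have ab2c1 : G.Adj b2 c1 := by
    by_contra hcon
    refine deg_le b2 b a2 (fun w hw => ?_)
    rcases hb2nbr w hw with h|h|h
    · exact Or.inl h
    · exact Or.inr h
    · exact absurd (h ▸ hw) hcon
  have hNb2 : ∀ y, G.Adj b2 y ↔ (y = b ∨ y = a2 ∨ y = c1) :=
    nbrs3 G (hreg b2) ha2b.symm hc1b.symm na2c1 abb2.symm aa2b2.symm ab2c1
  have hNc1 : ∀ y, G.Adj c1 y ↔ (y = c ∨ y = a1 ∨ y = b2) :=
    nbrs3 G (hreg c1) ha1c.symm hb2c.symm na1b2 acc1.symm hac1.symm ab2c1.symm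
  have hNc2 : ∀ y, G.Adj c2 y ↔ (y = c ∨ y = a2 ∨ y = b1) :=
    nbrs3 G (hreg c2) ha2c.symm hb1c.symm na2b1 acc2.symm aa2c2.symm ab1c2.symm
  -- the labeling
  
  have hsurj : Function.Surjective (![v0,a,b,c,a1,a2,b1,b2,c1,c2] : Fin 10 → V) := by
    intro x
    rcases hU x with h|h|h|h|h|h|h|h|h|h
    exacts [⟨0, h.symm⟩, ⟨1, h.symm⟩, ⟨2, h.symm⟩, ⟨3, h.symm⟩, ⟨4, h.symm⟩,
      ⟨5, h.symm⟩, ⟨6, h.symm⟩, ⟨7, h.symm⟩, ⟨8, h.symm⟩, ⟨9, h.symm⟩]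
  have hbij : Function.Bijective (![v0,a,b,c,a1,a2,b1,b2,c1,c2] : Fin 10 → V) :=
    (Fintype.bijective_iff_surjective_and_card _).mpr ⟨hsurj, by simp [hcard]⟩
  have e0 : (![v0,a,b,c,a1,a2,b1,b2,c1,c2] : Fin 10 → V) 0 = v0 := rfl
  have e1 : (![v0,a,b,c,a1,a2,b1,b2,c1,c2] : Fin 10 → V) 1 = a := rfl
  have e2 : (![v0,a,b,c,a1,a2,b1,b2,c1,c2] : Fin 10 → V) 2 = b := rfl
  have e3 : (![v0,a,b,c,a1,a2,b1,b2,c1,c2] : Fin 10 → V) 3 = c := rfl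
  have e4 : (![v0,a,b,c,a1,a2,b1,b2,c1,c2] : Fin 10 → V) 4 = a1 := rfl
  have e5 : (![v0,a,b,c,a1,a2,b1,b2,c1,c2] : Fin 10 → V) 5 = a2 := rfl
  have e6 : (![v0,a,b,c,a1,a2,b1,b2,c1,c2] : Fin 10 → V) 6 = b1 := rfl
  have e7 : (![v0,a,b,c,a1,a2,b1,b2,c1,c2] : Fin 10 → V) 7 = b2 := rfl
  have e8 : (![v0,a,b,c,a1,a2,b1,b2,c1,c2] : Fin 10 → V) 8 = c1 := rfl
  have e9 : (![v0,a,b,c,a1,a2,b1,b2,c1,c2] : Fin 10 → V) 9 = c2 := rfl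
  have f0 : (![v0,a,b,c,a1,a2,b1,b2,c1,c2] : Fin 10 → V) (⟨0, by norm_num⟩ : Fin 10) = v0 := rfl
  have f1 : (![v0,a,b,c,a1,a2,b1,b2,c1,c2] : Fin 10 → V) (⟨1, by norm_num⟩ : Fin 10) = a := rfl
  have f2 : (![v0,a,b,c,a1,a2,b1,b2,c1,c2] : Fin 10 → V) (⟨2, by norm_num⟩ : Fin 10) = b := rfl
  have f3 : (![v0,a,b,c,a1,a2,b1,b2,c1,c2] : Fin 10 → V) (⟨3, by norm_num⟩ : Fin 10) = c := rfl
  have f4 : (![v0,a,b,c,a1,a2,b1,b2,c1,c2] : Fin 10 → V) (⟨4, by norm_num⟩ : Fin 10) = a1 := rfl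
  have f5 : (![v0,a,b,c,a1,a2,b1,b2,c1,c2] : Fin 10 → V) (⟨5, by norm_num⟩ : Fin 10) = a2 := rfl
  have f6 : (![v0,a,b,c,a1,a2,b1,b2,c1,c2] : Fin 10 → V) (⟨6, by norm_num⟩ : Fin 10) = b1 := rfl
  have f7 : (![v0,a,b,c,a1,a2,b1,b2,c1,c2] : Fin 10 → V) (⟨7, by norm_num⟩ : Fin 10) = b2 := rfl
  have f8 : (![v0,a,b,c,a1,a2,b1,b2,c1,c2] : Fin 10 → V) (⟨8, by norm_num⟩ : Fin 10) = c1 := rfl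
  have f9 : (![v0,a,b,c,a1,a2,b1,b2,c1,c2] : Fin 10 → V) (⟨9, by norm_num⟩ : Fin 10) = c2 := rfl
  have hiff : ∀ i j : Fin 10, G.Adj ((![v0,a,b,c,a1,a2,b1,b2,c1,c2] : Fin 10 → V) i) ((![v0,a,b,c,a1,a2,b1,b2,c1,c2] : Fin 10 → V) j) ↔ petersenGraph.Adj (petVec i) (petVec j) := by
    intro i j
    rw [hpet]
    fin_cases i <;> fin_cases j <;>
      simp only [e0, e1, e2, e3, e4, e5, e6, e7, e8, e9, f0, f1, f2, f3, f4, f5, f6, f7, f8, f9] <;>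
      simp [hA0, hAa, hAb, hAc, hNa1, hNa2, hNb1, hNb2, hNc1, hNc2,
        h0a, h0b, h0c, haa1, haa2, hbb1, hbb2, hcc1, hcc2, hab, hac, hbc,
        h0a1, h0a2, ha12, h0b1, h0b2, hb12, h0c1, h0c2, hc12,
        ha1b, ha1c, ha2b, ha2c, hb1a, hb1c, hb2a, hb2c, hc1a, hc1b, hc2a, hc2b,
        na1b1, na1b2, na2b1, na2b2, na1c1, na1c2, na2c1, na2c2, nb1c1, nb1c2, nb2c1, nb2c2,
        h0a.symm, h0b.symm, h0c.symm, haa1.symm, haa2.symm, hbb1.symm, hbb2.symm,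
        hcc1.symm, hcc2.symm, hab.symm, hac.symm, hbc.symm,
        h0a1.symm, h0a2.symm, ha12.symm, h0b1.symm, h0b2.symm, hb12.symm,
        h0c1.symm, h0c2.symm, hc12.symm,
        ha1b.symm, ha1c.symm, ha2b.symm, ha2c.symm, hb1a.symm, hb1c.symm, hb2a.symm,
        hb2c.symm, hc1a.symm, hc1b.symm, hc2a.symm, hc2b.symm,
        na1b1.symm, na1b2.symm, na2b1.symm, na2b2.symm, na1c1.symm, na1c2.symm,
        na2c1.symm, na2c2.symm, nb1c1.symm, nb1c2.symm, nb2c1.symm, nb2c2.symm] <;>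
      decide
  refine ⟨⟨(Equiv.ofBijective (![v0,a,b,c,a1,a2,b1,b2,c1,c2] : Fin 10 → V) hbij).symm.trans (Equiv.ofBijective petVec petVec_bij), ?_⟩⟩
  intro x y
  obtain ⟨i, rfl⟩ := hbij.surjective x
  obtain ⟨j, rfl⟩ := hbij.surjective y
  simp only [Equiv.trans_apply, Equiv.ofBijective_symm_apply_apply]
  exact (hiff i j).symm

set_option maxHeartbeats 1000000 in
theorem petersen_unique_cubic_girth_five_ten_vertices {V : Type*} [Fintype V]
    (G : SimpleGraph V) [DecidableRel G.Adj]
    (hcard : Fintype.card V = 10)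
    (hreg : G.IsRegularOfDegree 3) (htri : G.CliqueFree 3)
    (hsq : ¬ ∃ (v : V) (c : G.Walk v v), c.IsCycle ∧ c.length = 4) :
    Nonempty (G ≃g petersenGraph) := by
  classical
  have tri : ∀ x y z : V, G.Adj x y → G.Adj x z → G.Adj y z → False := by
    intro x y z h1 h2 h3
    exact htri {x,y,z} (SimpleGraph.is3Clique_triple_iff.mpr ⟨h1, h2, h3⟩)
  have sq : ∀ x u y v : V, x ≠ y → u ≠ v →
      G.Adj x u → G.Adj u y → G.Adj y v → G.Adj v x → False := by
    intro x u y v hxy huv h1 h2 h3 h4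
    apply hsq
    refine ⟨x, SimpleGraph.Walk.cons h1 (SimpleGraph.Walk.cons h2
      (SimpleGraph.Walk.cons h3 (SimpleGraph.Walk.cons h4 SimpleGraph.Walk.nil))), ?_, rfl⟩
    have hxu := h1.ne
    have huy := h2.ne
    have hyv := h3.ne
    have hvx := h4.ne
    simp [SimpleGraph.Walk.isCycle_def, SimpleGraph.Walk.isTrail_def, Sym2.eq_iff]
    aesop
  have hV : Nonempty V := by
    rw [← Fintype.card_pos_iff, hcard]; norm_num
  obtain ⟨v0⟩ := hV
  obtain ⟨a, b, c, hab, hac, hbc, hN0⟩ := Finset.card_eq_three.mp (hreg v0)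
  have hv0a : v0 ∈ G.neighborFinset a := by
    rw [mem_neighborFinset]
    have : a ∈ G.neighborFinset v0 := by rw [hN0]; simp
    rw [mem_neighborFinset] at this; exact this.symm
  have hv0b : v0 ∈ G.neighborFinset b := by
    rw [mem_neighborFinset]
    have : b ∈ G.neighborFinset v0 := by rw [hN0]; simp
    rw [mem_neighborFinset] at this; exact this.symm
  have hv0c : v0 ∈ G.neighborFinset c := by
    rw [mem_neighborFinset]
    have : c ∈ G.neighborFinset v0 := by rw [hN0]; simp
    rw [mem_neighborFinset] at this; exact this.symm
  have hca : ((G.neighborFinset a).erase v0).card = 2 := by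
    rw [Finset.card_erase_of_mem hv0a]
    have h3 : (G.neighborFinset a).card = 3 := hreg a
    omega
  have hcb : ((G.neighborFinset b).erase v0).card = 2 := by
    rw [Finset.card_erase_of_mem hv0b]
    have h3 : (G.neighborFinset b).card = 3 := hreg b
    omega
  have hcc : ((G.neighborFinset c).erase v0).card = 2 := by
    rw [Finset.card_erase_of_mem hv0c]
    have h3 : (G.neighborFinset c).card = 3 := hreg c
    omega
  obtain ⟨a1, a2, ha12x, hEa⟩ := Finset.card_eq_two.mp hca
  obtain ⟨b1, b2, hb12x, hEb⟩ := Finset.card_eq_two.mp hcb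
  obtain ⟨c1, c2, hc12x, hEc⟩ := Finset.card_eq_two.mp hcc
  have hNa : G.neighborFinset a = {v0, a1, a2} := by
    rw [← Finset.insert_erase hv0a, hEa]
  have hNb : G.neighborFinset b = {v0, b1, b2} := by
    rw [← Finset.insert_erase hv0b, hEb]
  have hNc : G.neighborFinset c = {v0, c1, c2} := by
    rw [← Finset.insert_erase hv0c, hEc]
  obtain ⟨h0a1, h0a2, ha12⟩ := card3' (show ({v0,a1,a2} : Finset V).card = 3 by
    rw [← hNa]; exact hreg a)
  obtain ⟨h0b1, h0b2, hb12⟩ := card3' (show ({v0,b1,b2} : Finset V).card = 3 by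
    rw [← hNb]; exact hreg b)
  obtain ⟨h0c1, h0c2, hc12⟩ := card3' (show ({v0,c1,c2} : Finset V).card = 3 by
    rw [← hNc]; exact hreg c)
  -- adjacency iff for the four centers
  have hA0 : ∀ y, G.Adj v0 y ↔ (y = a ∨ y = b ∨ y = c) := by
    intro y; rw [← mem_neighborFinset, hN0]; simp
  have hAa : ∀ y, G.Adj a y ↔ (y = v0 ∨ y = a1 ∨ y = a2) := by
    intro y; rw [← mem_neighborFinset, hNa]; simp
  have hAb : ∀ y, G.Adj b y ↔ (y = v0 ∨ y = b1 ∨ y = b2) := by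
    intro y; rw [← mem_neighborFinset, hNb]; simp
  have hAc : ∀ y, G.Adj c y ↔ (y = v0 ∨ y = c1 ∨ y = c2) := by
    intro y; rw [← mem_neighborFinset, hNc]; simp
  have av0a : G.Adj v0 a := (hA0 a).mpr (Or.inl rfl)
  have av0b : G.Adj v0 b := (hA0 b).mpr (Or.inr (Or.inl rfl))
  have av0c : G.Adj v0 c := (hA0 c).mpr (Or.inr (Or.inr rfl))
  have aaa1 : G.Adj a a1 := (hAa a1).mpr (Or.inr (Or.inl rfl))
  have aaa2 : G.Adj a a2 := (hAa a2).mpr (Or.inr (Or.inr rfl))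
  have abb1 : G.Adj b b1 := (hAb b1).mpr (Or.inr (Or.inl rfl))
  have abb2 : G.Adj b b2 := (hAb b2).mpr (Or.inr (Or.inr rfl))
  have acc1 : G.Adj c c1 := (hAc c1).mpr (Or.inr (Or.inl rfl))
  have acc2 : G.Adj c c2 := (hAc c2).mpr (Or.inr (Or.inr rfl))
  have h0a : v0 ≠ a := av0a.ne
  have h0b : v0 ≠ b := av0b.ne
  have h0c : v0 ≠ c := av0c.ne
  have haa1 : a ≠ a1 := aaa1.ne
  have haa2 : a ≠ a2 := aaa2.ne
  have hbb1 : b ≠ b1 := abb1.ne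
  have hbb2 : b ≠ b2 := abb2.ne
  have hcc1 : c ≠ c1 := acc1.ne
  have hcc2 : c ≠ c2 := acc2.ne
  -- child vs other parent
  have ha1b : a1 ≠ b := by intro h; exact tri v0 a b av0a av0b (by rw [← h]; exact aaa1)
  have ha1c : a1 ≠ c := by intro h; exact tri v0 a c av0a av0c (by rw [← h]; exact aaa1)
  have ha2b : a2 ≠ b := by intro h; exact tri v0 a b av0a av0b (by rw [← h]; exact aaa2)
  have ha2c : a2 ≠ c := by intro h; exact tri v0 a c av0a av0c (by rw [← h]; exact aaa2)
  have hb1a : b1 ≠ a := by intro h; exact tri v0 b a av0b av0a (by rw [← h]; exact abb1)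
  have hb1c : b1 ≠ c := by intro h; exact tri v0 b c av0b av0c (by rw [← h]; exact abb1)
  have hb2a : b2 ≠ a := by intro h; exact tri v0 b a av0b av0a (by rw [← h]; exact abb2)
  have hb2c : b2 ≠ c := by intro h; exact tri v0 b c av0b av0c (by rw [← h]; exact abb2)
  have hc1a : c1 ≠ a := by intro h; exact tri v0 c a av0c av0a (by rw [← h]; exact acc1)
  have hc1b : c1 ≠ b := by intro h; exact tri v0 c b av0c av0b (by rw [← h]; exact acc1)
  have hc2a : c2 ≠ a := by intro h; exact tri v0 c a av0c av0a (by rw [← h]; exact acc2)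
  have hc2b : c2 ≠ b := by intro h; exact tri v0 c b av0c av0b (by rw [← h]; exact acc2)
  -- cross-children distinctness
  have na1b1 : a1 ≠ b1 := by intro h; exact sq a v0 b a1 hab h0a1 av0a.symm av0b (by rw [h]; exact abb1) aaa1.symm
  have na1b2 : a1 ≠ b2 := by intro h; exact sq a v0 b a1 hab h0a1 av0a.symm av0b (by rw [h]; exact abb2) aaa1.symm
  have na2b1 : a2 ≠ b1 := by intro h; exact sq a v0 b a2 hab h0a2 av0a.symm av0b (by rw [h]; exact abb1) aaa2.symm
  have na2b2 : a2 ≠ b2 := by intro h; exact sq a v0 b a2 hab h0a2 av0a.symm av0b (by rw [h]; exact abb2) aaa2.symm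
  have na1c1 : a1 ≠ c1 := by intro h; exact sq a v0 c a1 hac h0a1 av0a.symm av0c (by rw [h]; exact acc1) aaa1.symm
  have na1c2 : a1 ≠ c2 := by intro h; exact sq a v0 c a1 hac h0a1 av0a.symm av0c (by rw [h]; exact acc2) aaa1.symm
  have na2c1 : a2 ≠ c1 := by intro h; exact sq a v0 c a2 hac h0a2 av0a.symm av0c (by rw [h]; exact acc1) aaa2.symm
  have na2c2 : a2 ≠ c2 := by intro h; exact sq a v0 c a2 hac h0a2 av0a.symm av0c (by rw [h]; exact acc2) aaa2.symm
  have nb1c1 : b1 ≠ c1 := by intro h; exact sq b v0 c b1 hbc h0b1 av0b.symm av0c (by rw [h]; exact acc1) abb1.symm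
  have nb1c2 : b1 ≠ c2 := by intro h; exact sq b v0 c b1 hbc h0b1 av0b.symm av0c (by rw [h]; exact acc2) abb1.symm
  have nb2c1 : b2 ≠ c1 := by intro h; exact sq b v0 c b2 hbc h0b2 av0b.symm av0c (by rw [h]; exact acc1) abb2.symm
  have nb2c2 : b2 ≠ c2 := by intro h; exact sq b v0 c b2 hbc h0b2 av0b.symm av0c (by rw [h]; exact acc2) abb2.symm
  -- exhaustion
  have hS : ({v0,a,b,c,a1,a2,b1,b2,c1,c2} : Finset V).card = 10 := by
    rw [Finset.card_insert_of_notMem (by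
        simp [h0a, h0b, h0c, h0a1, h0a2, h0b1, h0b2, h0c1, h0c2]),
      Finset.card_insert_of_notMem (by
        simp [hab, hac, haa1, haa2, hb1a.symm, hb2a.symm, hc1a.symm, hc2a.symm]),
      Finset.card_insert_of_notMem (by
        simp [hbc, ha1b.symm, ha2b.symm, hbb1, hbb2, hc1b.symm, hc2b.symm]),
      Finset.card_insert_of_notMem (by
        simp [ha1c.symm, ha2c.symm, hb1c.symm, hb2c.symm, hcc1, hcc2]),
      Finset.card_insert_of_notMem (by
        simp [ha12, na1b1, na1b2, na1c1, na1c2]),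
      Finset.card_insert_of_notMem (by
        simp [na2b1, na2b2, na2c1, na2c2]),
      Finset.card_insert_of_notMem (by
        simp [hb12, nb1c1, nb1c2]),
      Finset.card_insert_of_notMem (by
        simp [nb2c1, nb2c2]),
      Finset.card_insert_of_notMem (by simp [hc12]),
      Finset.card_singleton]
  have hSuniv : ({v0,a,b,c,a1,a2,b1,b2,c1,c2} : Finset V) = Finset.univ :=
    Finset.eq_univ_of_card _ (by rw [hS, hcard])
  have hU : ∀ x : V, x = v0 ∨ x = a ∨ x = b ∨ x = c ∨ x = a1 ∨ x = a2 ∨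
      x = b1 ∨ x = b2 ∨ x = c1 ∨ x = c2 := by
    intro x
    have hx : x ∈ ({v0,a,b,c,a1,a2,b1,b2,c1,c2} : Finset V) := by
      rw [hSuniv]; exact Finset.mem_univ x
    simpa using hx
  -- a1 is adjacent to one of b1, b2 and one of c1, c2
  have hcard3 : ∀ (z w1 w2 : V), ({z, w1, w2} : Finset V).card ≤ 3 := by
    intro z w1 w2
    have h1 := Finset.card_insert_le z ({w1, w2} : Finset V)
    have h2 := Finset.card_insert_le w1 ({w2} : Finset V)
    simp at h1 h2
    omega
  have h1 : G.Adj a1 b1 ∨ G.Adj a1 b2 := by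
    by_contra hcon
    push_neg at hcon
    obtain ⟨hc1', hc2'⟩ := hcon
    have hsub : G.neighborFinset a1 ⊆ {a, c1, c2} := by
      intro w hw
      rw [mem_neighborFinset] at hw
      rcases hU w with h|h|h|h|h|h|h|h|h|h
      · rw [h] at hw
        exact absurd ((hA0 a1).mp hw.symm)
          (by rintro (h|h|h); exacts [haa1 h.symm, ha1b h, ha1c h])
      · simp [h]
      · rw [h] at hw
        exact absurd hw (fun hh => sq v0 a a1 b h0a1 hab av0a aaa1 hh av0b.symm)
      · rw [h] at hw
        exact absurd hw (fun hh => sq v0 a a1 c h0a1 hac av0a aaa1 hh av0c.symm)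
      · rw [h] at hw
        exact absurd rfl hw.ne
      · rw [h] at hw
        exact absurd hw (fun hh => tri a a1 a2 aaa1 aaa2 hh)
      · rw [h] at hw
        exact absurd hw hc1'
      · rw [h] at hw
        exact absurd hw hc2'
      · simp [h]
      · simp [h]
    have hle : ({a, c1, c2} : Finset V).card ≤ (G.neighborFinset a1).card := by
      have h3 : (G.neighborFinset a1).card = 3 := hreg a1
      have h4 := hcard3 a c1 c2
      omega
    have heq := Finset.eq_of_subset_of_card_le hsub hle
    have hr : G.Adj a1 c1 := by rw [← mem_neighborFinset, heq]; simp
    have hs' : G.Adj a1 c2 := by rw [← mem_neighborFinset, heq]; simp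
    exact sq c c1 a1 c2 ha1c.symm hc12 acc1 hr.symm hs' acc2.symm
  have h2 : G.Adj a1 c1 ∨ G.Adj a1 c2 := by
    by_contra hcon
    push_neg at hcon
    obtain ⟨hc1', hc2'⟩ := hcon
    have hsub : G.neighborFinset a1 ⊆ {a, b1, b2} := by
      intro w hw
      rw [mem_neighborFinset] at hw
      rcases hU w with h|h|h|h|h|h|h|h|h|h
      · rw [h] at hw
        exact absurd ((hA0 a1).mp hw.symm)
          (by rintro (h|h|h); exacts [haa1 h.symm, ha1b h, ha1c h])
      · simp [h]
      · rw [h] at hw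
        exact absurd hw (fun hh => sq v0 a a1 b h0a1 hab av0a aaa1 hh av0b.symm)
      · rw [h] at hw
        exact absurd hw (fun hh => sq v0 a a1 c h0a1 hac av0a aaa1 hh av0c.symm)
      · rw [h] at hw
        exact absurd rfl hw.ne
      · rw [h] at hw
        exact absurd hw (fun hh => tri a a1 a2 aaa1 aaa2 hh)
      · simp [h]
      · simp [h]
      · rw [h] at hw
        exact absurd hw hc1'
      · rw [h] at hw
        exact absurd hw hc2'
    have hle : ({a, b1, b2} : Finset V).card ≤ (G.neighborFinset a1).card := by
      have h3 : (G.neighborFinset a1).card = 3 := hreg a1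
      have h4 := hcard3 a b1 b2
      omega
    have heq := Finset.eq_of_subset_of_card_le hsub hle
    have hr : G.Adj a1 b1 := by rw [← mem_neighborFinset, heq]; simp
    have hs' : G.Adj a1 b2 := by rw [← mem_neighborFinset, heq]; simp
    exact sq b b1 a1 b2 ha1b.symm hb12 abb1 hr.symm hs' abb2.symm
  have hNb' : G.neighborFinset b = {v0, b2, b1} := by
    rw [hNb, Finset.pair_comm b1 b2]
  have hNc' : G.neighborFinset c = {v0, c2, c1} := by
    rw [hNc, Finset.pair_comm c1 c2]
  rcases h1 with h1|h1 <;> rcases h2 with h2|h2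
  · exact petersen_aux G hcard hreg tri sq v0 a b c a1 a2 b1 b2 c1 c2
      hN0 hNa hNb hNc hU h1 h2
  · have hU' : ∀ x : V, x = v0 ∨ x = a ∨ x = b ∨ x = c ∨ x = a1 ∨ x = a2 ∨
        x = b1 ∨ x = b2 ∨ x = c2 ∨ x = c1 := by
      intro x
      rcases hU x with h|h|h|h|h|h|h|h|h|h
      exacts [Or.inl h, Or.inr (Or.inl h), Or.inr (Or.inr (Or.inl h)), Or.inr (Or.inr (Or.inr (Or.inl h))), Or.inr (Or.inr (Or.inr (Or.inr (Or.inl h)))), Or.inr (Or.inr (Or.inr (Or.inr (Or.inr (Or.inl h))))), Or.inr (Or.inr (Or.inr (Or.inr (Or.inr (Or.inr (Or.inl h)))))), Or.inr (Or.inr (Or.inr (Or.inr (Or.inr (Or.inr (Or.inr (Or.inl h))))))), Or.inr (Or.inr (Or.inr (Or.inr (Or.inr (Or.inr (Or.inr (Or.inr (Or.inr (h))))))))), Or.inr (Or.inr (Or.inr (Or.inr (Or.inr (Or.inr (Or.inr (Or.inr (Or.inl h))))))))]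
    exact petersen_aux G hcard hreg tri sq v0 a b c a1 a2 b1 b2 c2 c1
      hN0 hNa hNb hNc' hU' h1 h2
  · have hU' : ∀ x : V, x = v0 ∨ x = a ∨ x = b ∨ x = c ∨ x = a1 ∨ x = a2 ∨
        x = b2 ∨ x = b1 ∨ x = c1 ∨ x = c2 := by
      intro x
      rcases hU x with h|h|h|h|h|h|h|h|h|h
      exacts [Or.inl h, Or.inr (Or.inl h), Or.inr (Or.inr (Or.inl h)), Or.inr (Or.inr (Or.inr (Or.inl h))), Or.inr (Or.inr (Or.inr (Or.inr (Or.inl h)))), Or.inr (Or.inr (Or.inr (Or.inr (Or.inr (Or.inl h))))), Or.inr (Or.inr (Or.inr (Or.inr (Or.inr (Or.inr (Or.inr (Or.inl h))))))), Or.inr (Or.inr (Or.inr (Or.inr (Or.inr (Or.inr (Or.inl h)))))), Or.inr (Or.inr (Or.inr (Or.inr (Or.inr (Or.inr (Or.inr (Or.inr (Or.inl h)))))))), Or.inr (Or.inr (Or.inr (Or.inr (Or.inr (Or.inr (Or.inr (Or.inr (Or.inr (h)))))))))]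
    exact petersen_aux G hcard hreg tri sq v0 a b c a1 a2 b2 b1 c1 c2
      hN0 hNa hNb' hNc hU' h1 h2
  · have hU' : ∀ x : V, x = v0 ∨ x = a ∨ x = b ∨ x = c ∨ x = a1 ∨ x = a2 ∨
        x = b2 ∨ x = b1 ∨ x = c2 ∨ x = c1 := by
      intro x
      rcases hU x with h|h|h|h|h|h|h|h|h|h
      exacts [Or.inl h, Or.inr (Or.inl h), Or.inr (Or.inr (Or.inl h)), Or.inr (Or.inr (Or.inr (Or.inl h))), Or.inr (Or.inr (Or.inr (Or.inr (Or.inl h)))), Or.inr (Or.inr (Or.inr (Or.inr (Or.inr (Or.inl h))))), Or.inr (Or.inr (Or.inr (Or.inr (Or.inr (Or.inr (Or.inr (Or.inl h))))))), Or.inr (Or.inr (Or.inr (Or.inr (Or.inr (Or.inr (Or.inl h)))))), Or.inr (Or.inr (Or.inr (Or.inr (Or.inr (Or.inr (Or.inr (Or.inr (Or.inr (h))))))))), Or.inr (Or.inr (Or.inr (Or.inr (Or.inr (Or.inr (Or.inr (Or.inr (Or.inl h))))))))]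
    exact petersen_aux G hcard hreg tri sq v0 a b c a1 a2 b2 b1 c2 c1
      hN0 hNa hNb' hNc' hU' h1 h2
end
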